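/- For all u = (u_n), v = (v_n) in the open unit ball B_{c₀}, the pseudohyperbolic distance between the point evaluations at u and v on H^∞(B_{c₀}) satisfies: sup{ |f(v)| : f ∈ H^∞(B_{c₀}), sup_{x ∈ B_{c₀}} |f(x)| ≤ 1, f(u) = 0 } = sup_{n ≥ 1} | (u_n − v_n) / (1 − conj(u_n) v_n) |. -/

import Mathlib

open Filter Topology Metric
open scoped ZeroAtInfty ComplexConjugate BoundedContinuousFunction

noncomputable section

/-!
The coordinatewise Möbius map `φ_u x = ((u n - x n) / (1 - conj (u n) * x n))ₙ` is a holomorphic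
involution of the unit ball of `c₀` exchanging `0` and `u`. For an admissible `f`, the Schwarz
lemma applied to `f ∘ φ_u` at the point `φ_u v` gives `|f v| ≤ ‖φ_u v‖ = sup_n |φ_{u n} (v n)|`;
conversely, the coordinate functionals `x ↦ φ_{u n} (x n)` are admissible and take the value
`φ_{u n} (v n)` at `v`. Holomorphy of `φ_u` is seen in `ℓ^∞ = ℕ →ᵇ ℂ`, where
`φ_u x = (u - x) (1 - ū x)⁻¹` is made of Banach algebra operations, and transferred back to the
closed subspace `c₀`.
-/

def moebius (a z : ℂ) : ℂ := (a - z) / (1 - conj a * z)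

lemma one_sub_conj_mul_ne_zero {a z : ℂ} (h : ‖a‖ * ‖z‖ < 1) : 1 - conj a * z ≠ 0 := by
  intro h0
  have : ‖conj a * z‖ = 1 := by rw [← sub_eq_zero.mp h0, norm_one]
  rw [norm_mul, Complex.norm_conj] at this
  exact h.ne this

lemma normSq_one_sub_conj_mul_sub_normSq_sub (a z : ℂ) :
    Complex.normSq (1 - conj a * z) - Complex.normSq (a - z)
      = (1 - Complex.normSq a) * (1 - Complex.normSq z) := by
  simp only [Complex.normSq_apply, Complex.sub_re, Complex.sub_im, Complex.mul_re,
    Complex.mul_im, Complex.one_re, Complex.one_im, Complex.conj_re, Complex.conj_im]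
  ring

lemma norm_moebius_le {a z : ℂ} {r s : ℝ} (ha : ‖a‖ ≤ r) (hz : ‖z‖ ≤ s) (hr : r < 1)
    (hs : s < 1) : ‖moebius a z‖ ≤ (r + s) / (1 + r * s) := by
  have hr0 : 0 ≤ r := (norm_nonneg a).trans ha
  have hs0 : 0 ≤ s := (norm_nonneg z).trans hz
  have haz : ‖a‖ * ‖z‖ ≤ r * s := mul_le_mul ha hz (norm_nonneg z) hr0
  have hD : 0 < ‖1 - conj a * z‖ :=
    norm_pos_iff.mpr (one_sub_conj_mul_ne_zero (by nlinarith))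
  have hD_le : ‖1 - conj a * z‖ ≤ 1 + r * s := by
    calc ‖1 - conj a * z‖ ≤ ‖(1 : ℂ)‖ + ‖conj a * z‖ := norm_sub_le _ _
      _ = 1 + ‖a‖ * ‖z‖ := by rw [norm_one, norm_mul, Complex.norm_conj]
      _ ≤ 1 + r * s := by linarith
  have hgap : (1 - r ^ 2) * (1 - s ^ 2) ≤ ‖1 - conj a * z‖ ^ 2 - ‖a - z‖ ^ 2 := by
    rw [Complex.sq_norm, Complex.sq_norm, normSq_one_sub_conj_mul_sub_normSq_sub,
      ← Complex.sq_norm, ← Complex.sq_norm]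
    have h1 : ‖a‖ ^ 2 ≤ r ^ 2 := pow_le_pow_left₀ (norm_nonneg a) ha 2
    have h2 : ‖z‖ ^ 2 ≤ s ^ 2 := pow_le_pow_left₀ (norm_nonneg z) hz 2
    apply mul_le_mul <;> nlinarith
  rw [moebius, norm_div, div_le_div_iff₀ hD (by positivity)]
  have hδ : 0 ≤ (1 - r ^ 2) * (1 - s ^ 2) := by apply mul_nonneg <;> nlinarith
  have hD_sq : ‖1 - conj a * z‖ ^ 2 ≤ (1 + r * s) ^ 2 := pow_le_pow_left₀ hD.le hD_le 2
  refine (pow_le_pow_iff_left₀ (by positivity) (by positivity) two_ne_zero).mp ?_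
  -- `(r + s)² = (1 + rs)² - (1 - r²)(1 - s²)`
  nlinarith [mul_le_mul_of_nonneg_right hgap (sq_nonneg (1 + r * s)),
    mul_le_mul_of_nonneg_left hD_sq hδ]

lemma add_div_one_add_mul_lt_one {r s : ℝ} (hr0 : 0 ≤ r) (hs0 : 0 ≤ s) (hr : r < 1)
    (hs : s < 1) : (r + s) / (1 + r * s) < 1 := by
  rw [div_lt_one (by positivity)]
  nlinarith

lemma moebius_moebius {a z : ℂ} (ha : ‖a‖ < 1) (hz : ‖z‖ ≤ 1) :
    moebius a (moebius a z) = z := by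
  have hD : 1 - conj a * z ≠ 0 :=
    one_sub_conj_mul_ne_zero (by nlinarith [norm_nonneg a, norm_nonneg z])
  have hA : 1 - conj a * a ≠ 0 := one_sub_conj_mul_ne_zero (by nlinarith [norm_nonneg a])
  have hnum : a - moebius a z = z * (1 - conj a * a) / (1 - conj a * z) := by
    rw [moebius, eq_div_iff hD, sub_mul, div_mul_cancel₀ _ hD]; ring
  have hden : 1 - conj a * moebius a z = (1 - conj a * a) / (1 - conj a * z) := by
    rw [moebius, eq_div_iff hD, sub_mul, mul_div_assoc', div_mul_cancel₀ _ hD]; ring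
  rw [moebius, hnum, hden, div_div_div_cancel_right₀ hD, mul_div_cancel_right₀ _ hA]

theorem LinearIsometry.differentiableAt_of_differentiableAt_comp {𝕜 X E F : Type*}
    [NontriviallyNormedField 𝕜] [NormedAddCommGroup X] [NormedSpace 𝕜 X]
    [NormedAddCommGroup E] [NormedSpace 𝕜 E] [CompleteSpace E]
    [NormedAddCommGroup F] [NormedSpace 𝕜 F] (ι : E →ₗᵢ[𝕜] F) {g : X → E} {x : X}
    (h : DifferentiableAt 𝕜 (fun y ↦ ι (g y)) x) : DifferentiableAt 𝕜 g x := by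
  set D := fderiv 𝕜 (fun y ↦ ι (g y)) x
  -- directional derivatives are limits of difference quotients, which lie in the closed range
  have hD : ∀ v, D v ∈ Set.range ι := fun v ↦
    ι.isometry.isClosedEmbedding.isClosed_range.mem_of_tendsto
      (h.hasFDerivAt.hasLineDerivAt v).tendsto_slope_zero
      (Eventually.of_forall fun t ↦ ⟨t⁻¹ • (g (x + t • v) - g x), by simp⟩)
  choose D' hD' using hD
  let L : X →L[𝕜] E := LinearMap.mkContinuous
    { toFun := D'
      map_add' := fun v w ↦ ι.injective (by simp [hD'])
      map_smul' := fun c v ↦ ι.injective (by simp [hD']) }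
    ‖D‖ fun v ↦ by simpa [← ι.norm_map, hD'] using D.le_opNorm v
  refine ⟨L, hasFDerivAt_iff_tendsto.mpr ?_⟩
  simpa [← ι.norm_map, L, hD'] using hasFDerivAt_iff_tendsto.mp h.hasFDerivAt

namespace ZeroAtInftyContinuousMap

variable {α β : Type*} [TopologicalSpace α] [NormedAddCommGroup β]

def toBCFₗᵢ (𝕜 : Type*) [NormedField 𝕜] [NormedSpace 𝕜 β] : C₀(α, β) →ₗᵢ[𝕜] α →ᵇ β where
  toFun := toBCF
  map_add' _ _ := rfl
  map_smul' _ _ := rfl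
  norm_map' _ := norm_toBCF_eq_norm

@[simp] lemma toBCFₗᵢ_apply (𝕜 : Type*) [NormedField 𝕜] [NormedSpace 𝕜 β] (f : C₀(α, β)) :
    toBCFₗᵢ 𝕜 f = f.toBCF := rfl

lemma differentiable_toBCF (𝕜 : Type*) [NontriviallyNormedField 𝕜] [NormedSpace 𝕜 β] :
    Differentiable 𝕜 (toBCF : C₀(α, β) → α →ᵇ β) :=
  (toBCFₗᵢ 𝕜 : C₀(α, β) →ₗᵢ[𝕜] α →ᵇ β).toContinuousLinearMap.differentiable

lemma norm_apply_le (f : C₀(α, β)) (x : α) : ‖f x‖ ≤ ‖f‖ :=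
  norm_toBCF_eq_norm (f := f) ▸ f.toBCF.norm_coe_le_norm x

end ZeroAtInftyContinuousMap

lemma BoundedContinuousFunction.ringInverse_apply {α 𝕜 : Type*} [TopologicalSpace α]
    [NormedField 𝕜] {f : α →ᵇ 𝕜} (hf : IsUnit f) (x : α) : Ring.inverse f x = (f x)⁻¹ := by
  obtain ⟨g, rfl⟩ := hf
  rw [Ring.inverse_unit]
  refine eq_inv_of_mul_eq_one_left ?_
  rw [← BoundedContinuousFunction.mul_apply, g.inv_mul]; rfl

lemma differentiableAt_moebius {a z : ℂ} (h : 1 - conj a * z ≠ 0) :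
    DifferentiableAt ℂ (moebius a) z :=
  ((differentiableAt_const a).sub differentiableAt_id).div
    ((differentiableAt_const 1).sub (differentiableAt_id.const_mul _)) h

open ZeroAtInftyContinuousMap

def moebiusC0 (u x : C₀(ℕ, ℂ)) : C₀(ℕ, ℂ) where
  toFun n := moebius (u n) (x n)
  continuous_toFun := continuous_of_discreteTopology
  zero_at_infty' := by
    have h : ContinuousAt (fun p : ℂ × ℂ ↦ moebius p.1 p.2) (0, 0) :=
      (continuousAt_fst.sub continuousAt_snd).div
        (continuousAt_const.sub ((Complex.continuous_conj.continuousAt.comp continuousAt_fst).mul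
          continuousAt_snd)) (by simp)
    simpa [moebius, Function.comp_def] using
      h.tendsto.comp ((zero_at_infty u).prodMk_nhds (zero_at_infty x))

@[simp] lemma moebiusC0_apply (u x : C₀(ℕ, ℂ)) (n : ℕ) :
    moebiusC0 u x n = moebius (u n) (x n) := rfl

lemma moebiusC0_zero (u : C₀(ℕ, ℂ)) : moebiusC0 u 0 = u := by
  ext n; simp [moebius]

lemma moebiusC0_moebiusC0 {u x : C₀(ℕ, ℂ)} (hu : ‖u‖ < 1) (hx : ‖x‖ ≤ 1) :
    moebiusC0 u (moebiusC0 u x) = x := by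
  ext n
  exact moebius_moebius ((norm_apply_le u n).trans_lt hu) ((norm_apply_le x n).trans hx)

lemma norm_moebiusC0_lt_one {u x : C₀(ℕ, ℂ)} (hu : ‖u‖ < 1) (hx : ‖x‖ < 1) :
    ‖moebiusC0 u x‖ < 1 := by
  refine lt_of_le_of_lt ?_ (add_div_one_add_mul_lt_one (norm_nonneg u) (norm_nonneg x) hu hx)
  rw [← norm_toBCF_eq_norm, BoundedContinuousFunction.norm_le (by positivity)]
  exact fun n ↦ norm_moebius_le (norm_apply_le u n) (norm_apply_le x n) hu hx

lemma isUnit_one_sub_star_toBCF_mul_toBCF {u x : C₀(ℕ, ℂ)} (h : ‖u‖ * ‖x‖ < 1) :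
    IsUnit (1 - star u.toBCF * x.toBCF) := by
  have hlt : ‖star u.toBCF * x.toBCF‖ < 1 :=
    (norm_mul_le _ _).trans_lt (by rwa [norm_star, norm_toBCF_eq_norm, norm_toBCF_eq_norm])
  simpa only [Units.val_oneSub] using (Units.oneSub _ hlt).isUnit

lemma toBCF_moebiusC0 {u x : C₀(ℕ, ℂ)} (h : ‖u‖ * ‖x‖ < 1) :
    (moebiusC0 u x).toBCF
      = (u.toBCF - x.toBCF) * Ring.inverse (1 - star u.toBCF * x.toBCF) := by
  ext n
  simp [BoundedContinuousFunction.ringInverse_apply (isUnit_one_sub_star_toBCF_mul_toBCF h),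
    moebius, div_eq_mul_inv]

lemma differentiableAt_moebiusC0 {u x : C₀(ℕ, ℂ)} (h : ‖u‖ * ‖x‖ < 1) :
    DifferentiableAt ℂ (moebiusC0 u) x := by
  apply (toBCFₗᵢ ℂ).differentiableAt_of_differentiableAt_comp
  have hnear : ∀ᶠ y in 𝓝 x, ‖u‖ * ‖y‖ < 1 :=
    (continuous_const.mul continuous_norm).continuousAt.eventually_lt continuousAt_const h
  simp only [toBCFₗᵢ_apply]
  have heq : (fun y ↦ (moebiusC0 u y).toBCF) =ᶠ[𝓝 x]
      fun y ↦ (u.toBCF - y.toBCF) * Ring.inverse (1 - star u.toBCF * y.toBCF) :=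
    hnear.mono fun y hy ↦ toBCF_moebiusC0 hy
  rw [heq.differentiableAt_iff]
  have hι := differentiable_toBCF (α := ℕ) (β := ℂ) ℂ
  have hden : DifferentiableAt ℂ (fun y : C₀(ℕ, ℂ) ↦ 1 - star u.toBCF * y.toBCF) x :=
    (differentiableAt_const _).sub ((hι x).const_mul _)
  have hinv :=
    (differentiableAt_inverse (𝕜 := ℂ) (isUnit_one_sub_star_toBCF_mul_toBCF h)).comp x hden
  exact ((differentiableAt_const _).sub (hι x)).mul hinv

lemma norm_le_norm_moebiusC0 {f : C₀(ℕ, ℂ) → ℂ} (hf : DifferentiableOn ℂ f (ball 0 1))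
    (hf1 : ∀ x ∈ ball (0 : C₀(ℕ, ℂ)) 1, ‖f x‖ ≤ 1) {u v : C₀(ℕ, ℂ)} (hu : ‖u‖ < 1)
    (hv : ‖v‖ < 1) (hfu : f u = 0) : ‖f v‖ ≤ ‖moebiusC0 u v‖ := by
  have hmaps : Set.MapsTo (moebiusC0 u) (ball 0 1) (ball 0 1) := fun x hx ↦
    mem_ball_zero_iff.mpr (norm_moebiusC0_lt_one hu (mem_ball_zero_iff.mp hx))
  have hdiff : DifferentiableOn ℂ (fun x ↦ f (moebiusC0 u x)) (ball 0 1) :=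
    hf.comp (fun x hx ↦ (differentiableAt_moebiusC0 (mul_lt_one_of_nonneg_of_lt_one_left
      (norm_nonneg u) hu (mem_ball_zero_iff.mp hx).le)).differentiableWithinAt) hmaps
  have hmaps' : Set.MapsTo (fun x ↦ f (moebiusC0 u x)) (ball 0 1)
      (closedBall (f (moebiusC0 u 0)) 1) := fun x hx ↦ by
    simpa [moebiusC0_zero, hfu] using hf1 _ (hmaps hx)
  simpa [moebiusC0_zero, moebiusC0_moebiusC0 hu hv.le, hfu] using
    Complex.dist_le_div_mul_dist_of_mapsTo_ball hdiff hmaps'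
      (mem_ball_zero_iff.mpr (norm_moebiusC0_lt_one hu hv))

lemma differentiableOn_moebius_apply {u : C₀(ℕ, ℂ)} (hu : ‖u‖ < 1) (n : ℕ) :
    DifferentiableOn ℂ (fun x : C₀(ℕ, ℂ) ↦ moebius (u n) (x n)) (ball 0 1) := fun x hx ↦ by
  have hx : ‖u n‖ * ‖x n‖ < 1 := mul_lt_one_of_nonneg_of_lt_one_left (norm_nonneg _)
    ((norm_apply_le u n).trans_lt hu) ((norm_apply_le x n).trans (mem_ball_zero_iff.mp hx).le)
  have heval : DifferentiableAt ℂ (fun y : C₀(ℕ, ℂ) ↦ y n) x :=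
    (BoundedContinuousFunction.evalCLM (α := ℕ) (β := ℂ) ℂ n).differentiableAt.comp x
      (differentiable_toBCF ℂ x)
  exact ((differentiableAt_moebius (one_sub_conj_mul_ne_zero hx)).comp x
    heval).differentiableWithinAt

/-- for `u, v` in the open unit ball of `c₀`, the pseudohyperbolic distance
between the evaluations at `u` and `v` on `H^∞(B_{c₀})` equals
`sup_n |(u_n − v_n)/(1 − conj(u_n) v_n)|`. -/
theorem stmt13 (u v : C₀(ℕ, ℂ)) (hu : u ∈ ball (0 : C₀(ℕ, ℂ)) 1)
    (hv : v ∈ ball (0 : C₀(ℕ, ℂ)) 1) :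
    IsLUB {t : ℝ | ∃ f : C₀(ℕ, ℂ) → ℂ, DifferentiableOn ℂ f (ball 0 1) ∧
        (∀ x ∈ ball (0 : C₀(ℕ, ℂ)) 1, ‖f x‖ ≤ 1) ∧ f u = 0 ∧ t = ‖f v‖}
      (⨆ n : ℕ, ‖(u n - v n) / (1 - conj (u n) * v n)‖) := by
  rw [mem_ball_zero_iff] at hu hv
  have hsup : ⨆ n : ℕ, ‖(u n - v n) / (1 - conj (u n) * v n)‖ = ‖moebiusC0 u v‖ := by
    rw [← norm_toBCF_eq_norm, BoundedContinuousFunction.norm_eq_iSup_norm]; rfl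
  rw [hsup]
  refine ⟨?_, fun b hb ↦ ?_⟩
  · rintro _ ⟨f, hf, hf1, hfu, rfl⟩
    exact norm_le_norm_moebiusC0 hf hf1 hu hv hfu
  have hcoord : ∀ n, ‖moebiusC0 u v n‖ ≤ b := fun n ↦ hb
    ⟨fun x ↦ moebius (u n) (x n), differentiableOn_moebius_apply hu n,
      fun x hx ↦ (norm_moebius_le (norm_apply_le u n) (norm_apply_le x n) hu
        (mem_ball_zero_iff.mp hx)).trans (add_div_one_add_mul_lt_one (norm_nonneg u)
          (norm_nonneg x) hu (mem_ball_zero_iff.mp hx)).le,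
      by simp [moebius], rfl⟩
  rw [← norm_toBCF_eq_norm, BoundedContinuousFunction.norm_le ((norm_nonneg _).trans (hcoord 0))]
  exact hcoord
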